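/- arXiv:1208.2380 — 2 statements merged into one kernel-verified Lean document; each statement's English description precedes it below -/
import Mathlib

section
/- Let A be a group with normal subgroup B, and let G ≤ S_w act transitively on [1, w]. Then inside the wreath product A ≀ G, the intersection of the normalizer of B ≀ G with the base subgroup A^{×w} equals B^{×w} · ΔA, where ΔA = {(x, ..., x) : x ∈ A} is the diagonal subgroup. -/
noncomputable section
open Finset
attribute [local instance] Classical.propDecidable

/-- The permutation action of `Equiv.Perm ι` on `ι → L`, as a homomorphism to `MulAut`. -/
def permAut (L ι : Type*) [Group L] : Equiv.Perm ι →* MulAut (ι → L) where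
  toFun σ :=
    { toFun := fun f => f ∘ σ.symm
      invFun := fun f => f ∘ σ
      left_inv := by intro f; funext i; simp
      right_inv := by intro f; funext i; simp
      map_mul' := by intro f g; rfl }
  map_one' := by
    apply MulEquiv.ext; intro f; rfl
  map_mul' := by
    intro σ τ; apply MulEquiv.ext; intro f; rfl

/-- The wreath product `L ≀ S_ι`, realized as a semidirect product. -/
abbrev Wreath (L : Type*) [Group L] (ι : Type*) : Type _ :=
  (ι → L) ⋊[permAut L ι] Equiv.Perm ι

instance instFintypeSemidirectProduct {N G : Type*} [Group N] [Group G]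
    (φ : G →* MulAut N) [Fintype N] [Fintype G] : Fintype (N ⋊[φ] G) :=
  Fintype.ofEquiv (N × G)
    { toFun := fun p => ⟨p.1, p.2⟩
      invFun := fun g => (g.left, g.right)
      left_inv := fun p => rfl
      right_inv := fun g => rfl }

/-- `i` is the minimal representative ("smallest element of the support") of its
`σ`-cycle (fixed points included as marked cycles with singleton support). -/
def minRep {ι : Type*} [LinearOrder ι] (σ : Equiv.Perm ι) (i : ι) : Prop :=
  ∀ j, σ.SameCycle i j → i ≤ j

/-- The cycle product `z_i · z_{σ⁻¹ i} ⋯ z_{σ^{-(o-1)} i}` of the entries of `f` along the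
`σ`-cycle of `i` (`o` the length of the cycle of `i`). -/
def cycleProd {L ι : Type*} [Group L] (σ : Equiv.Perm ι) (f : ι → L) (i : ι) : L :=
  ((List.range (Function.minimalPeriod (⇑σ) i)).map fun k => f (((σ ^ k)⁻¹ : Equiv.Perm ι) i)).prod

/-- The class function `φ^{×̃ w}` on the wreath product: its value on an element
conjugate to `y_{σ_1}(x_1)⋯y_{σ_r}(x_r)` is `φ(x_1)⋯φ(x_r)`. -/
def tw {L ι : Type*} [Group L] [Fintype ι] [LinearOrder ι] (φ : L → ℂ)
    (g : Wreath L ι) : ℂ :=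
  ∏ i ∈ Finset.univ.filter (fun i => minRep g.right i),
    φ (cycleProd g.right g.left i)

/-- Induction of class functions from a subgroup. -/
def indCF {G : Type*} [Group G] [Fintype G] (H : Subgroup G) (ψ : ↥H → ℂ) : G → ℂ :=
  fun g => (Nat.card ↥H : ℂ)⁻¹ *
    ∑ x : G, if h : x⁻¹ * g * x ∈ H then ψ ⟨x⁻¹ * g * x, h⟩ else 0

/-- A virtual character: a difference of two (finite-dimensional complex) characters. -/
def IsVirtual {G : Type} [Group G] (f : G → ℂ) : Prop :=
  ∃ V W : FDRep ℂ G, ∀ g, f g = V.character g - W.character g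

/-- The bilinear inner product of class functions, `⟨f,h⟩ = |G|⁻¹ Σ_g f(g) h(g⁻¹)`. -/
def cfInner {G : Type*} [Group G] [Fintype G] (f h : G → ℂ) : ℂ :=
  (Fintype.card G : ℂ)⁻¹ * ∑ g : G, f g * h g⁻¹

/-- An irreducible (complex) character: a character of norm one. -/
def IsIrrChar {G : Type} [Group G] [Fintype G] (χ : G → ℂ) : Prop :=
  (∃ V : FDRep ℂ G, ∀ g, χ g = V.character g) ∧ cfInner χ χ = 1

/-- Restriction of a wreath-product element to an invariant set of positions. -/
def wrRestrict {L ι : Type*} [Group L] (g : Wreath L ι) (P : ι → Prop)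
    (h : ∀ i, P i ↔ P (g.right i)) : Wreath L {i // P i} :=
  ⟨fun i => g.left i.1, g.right.subtypePerm (fun i => (h i).symm)⟩

end

/-!
Conjugation by a base element `f` sends `(h, σ)` to `(i ↦ f i · h i · (f (σ⁻¹ i))⁻¹, σ)`.
Conjugating the pure permutations of `G` and using transitivity forces `f i · (f j)⁻¹ ∈ B`
for all `i, j`; conversely, under that condition normality of `B` gives
`f i · b · (f j)⁻¹ ∈ B ↔ b ∈ B`, so conjugation by `f` preserves `B ≀ G` in both directions.
-/

theorem Subgroup.Normal.mul_mul_inv_mem_iff {A : Type*} [Group A] {B : Subgroup A}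
    (hB : B.Normal) {a b c : A} (hac : a * c⁻¹ ∈ B) : a * b * c⁻¹ ∈ B ↔ b ∈ B := by
  have hsplit : a * b * c⁻¹ = a * b * a⁻¹ * (a * c⁻¹) := by group
  rw [hsplit, B.mul_mem_cancel_right hac]
  exact ⟨fun h => by simpa [mul_assoc] using hB.conj_mem _ h a⁻¹, fun h => hB.conj_mem _ h a⟩

theorem Subgroup.forall_mul_inv_mem_iff_exists {A ι : Type*} [Group A] (B : Subgroup A)
    (f : ι → A) : (∀ i j, f i * (f j)⁻¹ ∈ B) ↔ ∃ x, ∀ i, f i * x⁻¹ ∈ B := by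
  constructor
  · intro h
    rcases isEmpty_or_nonempty ι with hι | ⟨⟨j⟩⟩
    · exact ⟨1, isEmptyElim⟩
    · exact ⟨f j, fun i => h i j⟩
  · rintro ⟨x, hx⟩ i j
    simpa [mul_assoc] using mul_mem (hx i) (inv_mem (hx j))

theorem Wreath.conj_of_right_eq_one {A ι : Type*} [Group A] {g : Wreath A ι}
    (hg : g.right = 1) (h : Wreath A ι) :
    g * h * g⁻¹ = ⟨fun i => g.left i * h.left i * (g.left (h.right⁻¹ i))⁻¹, h.right⟩ := by
  ext i
  · simp [hg, permAut, Equiv.Perm.inv_def, mul_assoc, Equiv.Perm.one_def]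
  · simp [hg]

theorem stmt10_general {A : Type*} [Group A] {ι : Type*}
    (B : Subgroup A) (hB : B.Normal) (G : Subgroup (Equiv.Perm ι))
    (htrans : ∀ i j : ι, ∃ σ ∈ G, σ i = j)
    (BwrG : Subgroup (Wreath A ι))
    (hBwrG : ∀ g : Wreath A ι, g ∈ BwrG ↔ ((∀ i, g.left i ∈ B) ∧ g.right ∈ G))
    (g : Wreath A ι) (hg : g.right = 1) :
    g ∈ Subgroup.normalizer BwrG ↔ ∃ x : A, ∀ i, g.left i * x⁻¹ ∈ B := by
  rw [← B.forall_mul_inv_mem_iff_exists, Subgroup.mem_normalizer_iff]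
  constructor
  · intro hN i j
    obtain ⟨σ, hσ, rfl⟩ := htrans j i
    have hconj := (hN ⟨1, σ⟩).1 ((hBwrG _).2 ⟨fun _ => one_mem B, hσ⟩)
    rw [Wreath.conj_of_right_eq_one hg, hBwrG] at hconj
    simpa using hconj.1 (σ j)
  · intro hconst h
    rw [Wreath.conj_of_right_eq_one hg, hBwrG, hBwrG]
    simp only [hB.mul_mul_inv_mem_iff (hconst _ _)]

/-- Let `B ⊴ A` and let `G ≤ S_ι` act transitively on `ι`.  Inside the
wreath product `A ≀ G`, the intersection of the normalizer of `B ≀ G` with the base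
subgroup `A^{×ι}` equals `B^{×ι} · ΔA`.  (An element of the base subgroup, i.e. with
trivial permutation part, lies in the normalizer iff its tuple of entries is a
`B`-tuple times a constant diagonal.) -/
theorem stmt10 {A : Type*} [Group A] {ι : Type*} [Fintype ι]
    (B : Subgroup A) (hB : B.Normal) (G : Subgroup (Equiv.Perm ι))
    (htrans : ∀ i j : ι, ∃ σ ∈ G, σ i = j)
    (BwrG : Subgroup (Wreath A ι))
    (hBwrG : ∀ g : Wreath A ι, g ∈ BwrG ↔ ((∀ i, g.left i ∈ B) ∧ g.right ∈ G))
    (g : Wreath A ι) (hg : g.right = 1) :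
    g ∈ Subgroup.normalizer BwrG ↔ ∃ x : A, ∀ i, g.left i * x⁻¹ ∈ B :=
  stmt10_general B hB G htrans BwrG hBwrG g hg
end

section
/- Let V_1, ..., V_r be finitely generated free abelian groups. For each i, let E_i be a subset of the dual V_i* = Hom(V_i, ℤ), and let f_i ∈ V_i* satisfy ker(f_i) ⊇ E_i^⊥ (the subgroup of V_i annihilated by all elements of E_i). If φ ∈ V_1 ⊗ ... ⊗ V_r is annihilated by every tensor f_1' ⊗ ... ⊗ f_r' with f_i' ∈ E_i, then (f_1 ⊗ ... ⊗ f_r)(φ) = 0. -/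
/-!
Over a principal ideal domain, a functional `f` on a finite free module `V` that vanishes on `E^⊥`
has a nonzero multiple in `span E`: otherwise the image of `f` in `V* ⧸ span E` is not torsion, so
it is separated from zero by a functional on that quotient (modulo torsion it is finite
torsion-free, hence free), and by reflexivity of `V` that functional is evaluation at a vector of
`E^⊥` on which `f` does not vanish. The pairing `(f₁, …, f_r) ↦ (f₁ ⊗ ⋯ ⊗ f_r)(φ)` is multilinear
and vanishes on `E₁ × ⋯ × E_r`, hence on the product of the spans, so
`(∏ aᵢ) • (f₁ ⊗ ⋯ ⊗ f_r)(φ) = 0` and `ℤ` has no zero divisors.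
-/

open scoped TensorProduct

/-- The pairing of a tuple of `ℤ`-linear functionals `f i : V i →ₗ ℤ` with the tensor
product `V 1 ⊗ ⋯ ⊗ V r`, i.e. the functional `f 1 ⊗ ⋯ ⊗ f r` under the canonical
identification of the dual of a tensor product. -/
noncomputable def tensorPairing {r : ℕ} (V : Fin r → Type*) [∀ i, AddCommGroup (V i)]
    [∀ i, Module ℤ (V i)] (f : ∀ i, Module.Dual ℤ (V i)) :
    PiTensorProduct ℤ V →ₗ[ℤ] ℤ :=
  PiTensorProduct.lift ((MultilinearMap.mkPiAlgebra ℤ (Fin r) ℤ).compLinearMap f)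

open Module Submodule

theorem Module.exists_smul_mem_span_of_forall_apply_eq_zero {R V : Type*} [CommRing R]
    [IsDomain R] [IsPrincipalIdealRing R] [AddCommGroup V] [Module R V] [Module.Free R V]
    [Module.Finite R V] {E : Set (Dual R V)} {f : Dual R V}
    (hf : ∀ v : V, (∀ e ∈ E, e v = 0) → f v = 0) :
    ∃ a : R, a ≠ 0 ∧ a • f ∈ span R E := by
  by_contra! h
  set W := span R E
  have hfW : W.mkQ f ∉ torsion R (Dual R V ⧸ W) := by
    rintro ⟨a, ha⟩
    rw [mkQ_apply, ← Quotient.mk_smul, Quotient.mk_eq_zero] at ha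
    exact h a (nonZeroDivisors.coe_ne_zero a) ha
  obtain ⟨χ, hχf, -⟩ := exists_dual_map_eq_bot_of_notMem hfW inferInstance
  set v := (evalEquiv R V).symm (χ ∘ₗ W.mkQ)
  have hv (g : Dual R V) : g v = χ (W.mkQ g) :=
    LinearMap.congr_fun ((evalEquiv R V).apply_symm_apply _) g
  refine hχf ?_
  rw [← hv]
  refine hf v fun e he => ?_
  rw [hv, mkQ_apply, (Quotient.mk_eq_zero W).mpr (subset_span he), map_zero]

theorem MultilinearMap.map_eq_zero_of_forall_mem_span {R ι N : Type*} {M : ι → Type*}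
    [CommSemiring R] [Finite ι] [∀ i, AddCommMonoid (M i)] [∀ i, Module R (M i)]
    [AddCommMonoid N] [Module R N] (g : MultilinearMap R M N) {s : ∀ i, Set (M i)}
    (hg : ∀ x, (∀ i, x i ∈ s i) → g x = 0) {x : ∀ i, M i} (hx : ∀ i, x i ∈ span R (s i)) :
    g x = 0 := by
  classical
  cases nonempty_fintype ι
  suffices ∀ t : Finset ι, ∀ x : ∀ i, M i,
      (∀ i ∈ t, x i ∈ span R (s i)) → (∀ i ∉ t, x i ∈ s i) → g x = 0 from
    this Finset.univ x (fun i _ => hx i) (fun i hi => absurd (Finset.mem_univ i) hi)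
  intro t
  induction t using Finset.induction_on with
  | empty => exact fun x _ hx => hg x fun i => hx i (Finset.notMem_empty i)
  | @insert j t hj ih =>
    intro x hspan hs
    have : span R (s j) ≤ LinearMap.ker (g.toLinearMap x j) := by
      refine span_le.mpr fun y hy => ?_
      refine ih _ (fun i hi => ?_) (fun i hi => ?_)
      · rw [Function.update_of_ne (ne_of_mem_of_not_mem hi hj)]
        exact hspan i (Finset.mem_insert_of_mem hi)
      · rcases eq_or_ne i j with rfl | hij
        · rwa [Function.update_self]
        · rw [Function.update_of_ne hij]
          exact hs i (by simp [hij, hi])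
    simpa using this (hspan j (Finset.mem_insert_self j t))

noncomputable def tensorPairingMultilinear {r : ℕ} (V : Fin r → Type*) [∀ i, AddCommGroup (V i)]
    [∀ i, Module ℤ (V i)] (φ : PiTensorProduct ℤ V) :
    MultilinearMap ℤ (fun i => Dual ℤ (V i)) ℤ :=
  ((LinearMap.applyₗ φ).comp PiTensorProduct.lift.toLinearMap).compMultilinearMap
    (MultilinearMap.piLinearMap (MultilinearMap.mkPiAlgebra ℤ (Fin r) ℤ))

theorem tensorPairingMultilinear_apply {r : ℕ} (V : Fin r → Type*) [∀ i, AddCommGroup (V i)]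
    [∀ i, Module ℤ (V i)] (φ : PiTensorProduct ℤ V) (f : ∀ i, Dual ℤ (V i)) :
    tensorPairingMultilinear V φ f = tensorPairing V f φ := by
  simp [tensorPairingMultilinear, tensorPairing, MultilinearMap.piLinearMap]

/-- Let `V 1, …, V r` be finitely generated free abelian groups,
`E i ⊆ (V i)*` and `f i ∈ (V i)*` with `ker (f i) ⊇ (E i)^⊥`.  If
`φ ∈ V 1 ⊗ ⋯ ⊗ V r` is annihilated by every `f' 1 ⊗ ⋯ ⊗ f' r` with `f' i ∈ E i`,
then `(f 1 ⊗ ⋯ ⊗ f r)(φ) = 0`. -/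
theorem stmt11 {r : ℕ} (V : Fin r → Type*) [∀ i, AddCommGroup (V i)] [∀ i, Module ℤ (V i)]
    [∀ i, Module.Free ℤ (V i)] [∀ i, Module.Finite ℤ (V i)]
    (E : ∀ i, Set (Module.Dual ℤ (V i))) (f : ∀ i, Module.Dual ℤ (V i))
    (hf : ∀ i, ∀ v : V i, (∀ e ∈ E i, e v = 0) → f i v = 0)
    (φ : PiTensorProduct ℤ V)
    (hφ : ∀ f' : ∀ i, Module.Dual ℤ (V i), (∀ i, f' i ∈ E i) → tensorPairing V f' φ = 0) :
    tensorPairing V f φ = 0 := by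
  choose a ha0 ha using fun i => exists_smul_mem_span_of_forall_apply_eq_zero (hf i)
  have h := (tensorPairingMultilinear V φ).map_eq_zero_of_forall_mem_span
    (fun f' hf' => (tensorPairingMultilinear_apply V φ f').trans (hφ f' hf')) ha
  rw [MultilinearMap.map_smul_univ, tensorPairingMultilinear_apply, smul_eq_zero] at h
  exact h.resolve_left (Finset.prod_ne_zero_iff.mpr fun i _ => ha0 i)
end
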